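/- arXiv:2408.07777 — 8 statements merged into one kernel-verified Lean document; each statement's English description precedes it below -/
import Mathlib

section
/- For i = 2,...,n, the polynomial z_i = Σ_{k=0}^{i-2} (-1)^k n^{i-k-1} C(i,k) p_{i-k} p_1^k + (i-1)(-1)^{i+1} p_1^i is annihilated by the operator D_- = -Σ_{k=1}^n ∂_k. -/
open MvPolynomial Finset

/-- `D₋ = -Σ ∂ₖ`. -/
noncomputable def Dminus (n : ℕ) (p : MvPolynomial (Fin n) ℚ) : MvPolynomial (Fin n) ℚ :=
  -∑ k : Fin n, pderiv k p

/-- The kernel generators `zᵢ`. -/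
noncomputable def zgen (n i : ℕ) : MvPolynomial (Fin n) ℚ :=
  (∑ k ∈ Finset.range (i - 1),
    ((-1 : ℚ) ^ k * (n : ℚ) ^ (i - k - 1) * (i.choose k : ℚ)) •
      (psum (Fin n) ℚ (i - k) * psum (Fin n) ℚ 1 ^ k)) +
  (((i : ℚ) - 1) * (-1 : ℚ) ^ (i + 1)) • psum (Fin n) ℚ 1 ^ i

lemma Lsmul' (n : ℕ) (c : ℚ) (p : MvPolynomial (Fin n) ℚ) :
    ∑ k : Fin n, pderiv k (c • p) = c • ∑ k : Fin n, pderiv k p := by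
  simp [Finset.smul_sum]

lemma Lmul' (n : ℕ) (a b : MvPolynomial (Fin n) ℚ) :
    ∑ k : Fin n, pderiv k (a * b)
      = (∑ k : Fin n, pderiv k a) * b + a * ∑ k : Fin n, pderiv k b := by
  simp only [pderiv_mul, Finset.sum_add_distrib, Finset.sum_mul, Finset.mul_sum]

lemma Lpsum' (n j : ℕ) :
    ∑ k : Fin n, pderiv k (psum (Fin n) ℚ j) = (j : ℚ) • psum (Fin n) ℚ (j - 1) := by
  classical
  simp only [psum, map_sum, pderiv_pow, pderiv_X]
  rw [Finset.sum_comm]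
  simp [Pi.single_apply, Finset.smul_sum, mul_comm, smul_eq_C_mul, mul_ite, mul_assoc]

lemma Lpow' (n m : ℕ) :
    ∑ k : Fin n, pderiv k (psum (Fin n) ℚ 1 ^ m)
      = ((m : ℚ) * n) • psum (Fin n) ℚ 1 ^ (m - 1) := by
  simp only [pderiv_pow]
  rw [← Finset.mul_sum, Lpsum']
  simp [psum_zero, smul_eq_C_mul, map_mul]
  ring

lemma Lterm' (n i t : ℕ) :
    ∑ k : Fin n, pderiv k (psum (Fin n) ℚ (i - t) * psum (Fin n) ℚ 1 ^ t)
      = (((i - t : ℕ)) : ℚ) • (psum (Fin n) ℚ (i - t - 1) * psum (Fin n) ℚ 1 ^ t)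
        + ((t : ℚ) * n) • (psum (Fin n) ℚ (i - t) * psum (Fin n) ℚ 1 ^ (t - 1)) := by
  rw [Lmul', Lpsum', Lpow', smul_mul_assoc, mul_smul_comm]

/-- For `2 ≤ i ≤ n`, the polynomial `zᵢ` is annihilated by `D₋`. -/
theorem Dminus_zgen (n i : ℕ) (h2 : 2 ≤ i) (hn : i ≤ n) :
    Dminus n (zgen n i) = 0 := by
  classical
  obtain ⟨m, rfl⟩ : ∃ m, i = m + 2 := ⟨i - 2, by omega⟩
  set P : ℕ → MvPolynomial (Fin n) ℚ := psum (Fin n) ℚ with hP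
  set A : ℕ → MvPolynomial (Fin n) ℚ := fun t =>
    ((-1 : ℚ) ^ t * (n : ℚ) ^ (m + 2 - t - 1) * ((m + 2).choose t : ℚ) * (((m + 2 - t : ℕ)) : ℚ)) •
      (P (m + 2 - t - 1) * P 1 ^ t) with hA
  set B : ℕ → MvPolynomial (Fin n) ℚ := fun t =>
    ((-1 : ℚ) ^ t * (n : ℚ) ^ (m + 2 - t - 1) * ((m + 2).choose t : ℚ) * ((t : ℚ) * (n : ℚ))) •
      (P (m + 2 - t) * P 1 ^ (t - 1)) with hB
  set Cl : MvPolynomial (Fin n) ℚ :=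
    ((((m + 2 : ℕ) : ℚ) - 1) * (-1 : ℚ) ^ (m + 2 + 1) * (((m + 2 : ℕ) : ℚ) * (n : ℚ))) •
      P 1 ^ (m + 2 - 1) with hCl
  have h1 : ∑ k : Fin n, pderiv k (zgen n (m + 2))
      = ∑ t ∈ Finset.range (m + 1), (A t + B t) + Cl := by
    rw [zgen]
    simp only [map_add, map_sum]
    rw [Finset.sum_add_distrib, Finset.sum_comm, show m + 2 - 1 = m + 1 from rfl]
    congr 1
    · refine Finset.sum_congr rfl fun t ht => ?_
      rw [Lsmul', Lterm', smul_add, smul_smul, smul_smul]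
    · rw [Lsmul', Lpow', smul_smul]
  have hB0 : B 0 = 0 := by simp [hB]
  have hcancel : ∀ t ∈ Finset.range m, A t + B (t + 1) = 0 := by
    intro t ht
    rw [Finset.mem_range] at ht
    have e1 : m + 2 - (t + 1) = m + 2 - t - 1 := by omega
    have e2 : t + 1 - 1 = t := rfl
    simp only [hA, hB, e1, e2]
    rw [← add_smul]
    convert zero_smul ℚ (P (m + 2 - t - 1) * P 1 ^ t) using 2
    have hch := Nat.choose_succ_right_eq (m + 2) t
    have hc : ((m + 2).choose (t + 1) : ℚ) * ((t + 1 : ℕ) : ℚ)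
        = ((m + 2).choose t : ℚ) * (((m + 2 - t : ℕ)) : ℚ) := by
      exact_mod_cast congrArg Nat.cast hch
    have hpow : (n : ℚ) ^ (m + 2 - t - 1) = (n : ℚ) ^ (m + 2 - t - 1 - 1) * n := by
      rw [← pow_succ]; congr 1; omega
    push_cast at hc ⊢
    rw [hpow]
    linear_combination (-(-1 : ℚ) ^ t * (n : ℚ) ^ (m + 2 - t - 1 - 1) * (n : ℚ)) * hc
  have hcm : ((m + 2).choose m : ℚ) * 2 = ((m + 2 : ℕ) : ℚ) * ((m : ℚ) + 1) := by
    have h1' := Nat.choose_succ_right_eq (m + 2) m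
    have h2' : (m + 2).choose (m + 1) = m + 2 := by
      rw [show m + 1 = (m + 2) - 1 by omega, Nat.choose_symm (by omega), Nat.choose_one_right]
    rw [h2', show m + 2 - m = 2 by omega] at h1'
    exact_mod_cast congrArg Nat.cast h1'.symm
  have hlast : A m + Cl = 0 := by
    simp only [hA, hCl]
    rw [show m + 2 - m - 1 = 1 by omega, show m + 2 - m = 2 by omega,
      show m + 2 - 1 = m + 1 from rfl,
      show P 1 * P 1 ^ m = P 1 ^ (m + 1) from (pow_succ' _ _).symm, ← add_smul]
    convert zero_smul ℚ (P 1 ^ (m + 1)) using 2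
    push_cast at hcm ⊢
    linear_combination ((-1 : ℚ) ^ m * (n : ℚ)) * hcm
  rw [Dminus, neg_eq_zero, h1]
  rw [Finset.sum_add_distrib, Finset.sum_range_succ, Finset.sum_range_succ']
  have hz : ∑ t ∈ Finset.range m, A t + ∑ t ∈ Finset.range m, B (t + 1) = 0 := by
    rw [← Finset.sum_add_distrib]
    exact Finset.sum_eq_zero hcancel
  linear_combination hz + hB0 + hlast
end

section
/- For n > 2 and 2 ≤ i ≤ n, the polynomial z_i = Σ_{k=0}^{i-2} (-1)^k n^{i-k-1} C(i,k) p_{i-k} p_1^k + (i-1)(-1)^{i+1} p_1^i is nonzero; specifically, the coefficient of x_1^i in z_i is ((n-1)^i + (-1)^i (n-1))/n, which is nonzero for n > 2. -/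
open MvPolynomial Finset

lemma aux_coeff (n : ℕ) (a : Fin n) (i : ℕ) (P : MvPolynomial (Fin n) ℚ) :
    ((aeval (fun j => if j = a then (Polynomial.X : Polynomial ℚ) else 0)) P).coeff i
      = MvPolynomial.coeff (Finsupp.single a i) P := by
  induction P using MvPolynomial.induction_on generalizing i with
  | C c =>
      simp only [aeval_C, Polynomial.algebraMap_eq, Polynomial.coeff_C, MvPolynomial.coeff_C]
      by_cases h : i = 0 <;> simp [h, Finsupp.single_eq_zero, eq_comm]
  | add p q hp hq => simp [hp, hq]
  | mul_X p j hp =>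
      rw [map_mul, aeval_X]
      by_cases hj : j = a
      · subst hj
        simp only [eq_self_iff_true, if_true]
        rcases i with _ | i
        · simp [MvPolynomial.coeff_mul_X', Finsupp.single_eq_zero]
        · rw [Polynomial.coeff_mul_X, hp, MvPolynomial.coeff_mul_X']
          rw [if_pos (by simp [Finsupp.support_single_ne_zero _ (Nat.succ_ne_zero i)])]
          congr 1
          ext b
          rcases eq_or_ne b j with rfl | hb <;>
            simp [Finsupp.single_apply, Finsupp.sub_apply, *]
      · rw [if_neg hj, mul_zero, Polynomial.coeff_zero, MvPolynomial.coeff_mul_X',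
          if_neg]
        intro h
        rcases eq_or_ne i 0 with rfl | hi
        · simp at h
        · rw [Finsupp.support_single_ne_zero _ hi] at h
          simp at h
          exact hj h

lemma aux_psum (n m : ℕ) (a : Fin n) (hm : m ≠ 0) :
    (aeval (fun j => if j = a then (Polynomial.X : Polynomial ℚ) else 0))
      (psum (Fin n) ℚ m) = Polynomial.X ^ m := by
  rw [psum, map_sum]
  rw [Finset.sum_eq_single a]
  · simp
  · intro b _ hb
    simp [hb, zero_pow hm]
  · simp

lemma aux_sum (n j : ℕ) (hn : (n : ℚ) ≠ 0) :
    (∑ k ∈ Finset.range (j + 1),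
      ((-1 : ℚ) ^ k * (n : ℚ) ^ (j + 2 - k - 1) * ((j+2).choose k : ℚ)))
      + (((j:ℚ) + 2) - 1) * (-1 : ℚ) ^ (j + 2 + 1)
    = (((n : ℚ) - 1) ^ (j+2) + (-1 : ℚ) ^ (j+2) * ((n : ℚ) - 1)) / n := by
  have hbin : ((n:ℚ)-1)^(j+2)
      = ∑ k ∈ Finset.range (j+3), (-1:ℚ)^k * (n:ℚ)^(j+2-k) * ((j+2).choose k : ℚ) := by
    rw [sub_pow, ← Finset.sum_range_reflect]
    apply Finset.sum_congr rfl
    intro k hk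
    rw [Finset.mem_range] at hk
    simp only [show j + 2 + 1 - 1 = j + 2 from rfl]
    have hk' : k ≤ j + 2 := by omega
    rw [show j + 2 - (j + 2 - k) = k by omega, Nat.choose_symm hk',
      show j + 2 - k + (j + 2) = k + 2 * (j + 2 - k) by omega, pow_add, pow_mul]
    norm_num
  rw [Finset.sum_range_succ, Finset.sum_range_succ] at hbin
  have hS : (∑ k ∈ Finset.range (j + 1),
      ((-1 : ℚ) ^ k * (n : ℚ) ^ (j + 2 - k - 1) * ((j+2).choose k : ℚ))) * n
      = ∑ k ∈ Finset.range (j + 1),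
      ((-1 : ℚ) ^ k * (n : ℚ) ^ (j + 2 - k) * ((j+2).choose k : ℚ)) := by
    rw [Finset.sum_mul]
    apply Finset.sum_congr rfl
    intro k hk
    rw [Finset.mem_range] at hk
    have hp : (n:ℚ)^(j+2-k-1) * n = (n:ℚ)^(j+2-k) := by
      rw [← pow_succ]; congr 1; omega
    linear_combination ((-1:ℚ)^k * ((j+2).choose k : ℚ)) * hp
  rw [eq_div_iff hn, add_mul, hS, hbin,
    show (j+2).choose (j+1) = j + 2 from Nat.choose_succ_self_right (j+1),
    Nat.choose_self, show j + 2 - (j+1) = 1 by omega, Nat.sub_self]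
  push_cast
  simp only [pow_succ]
  ring

/-- For `n > 2`, `2 ≤ i ≤ n`, the coefficient of `x₁^i` in `zᵢ` is
`((n-1)^i + (-1)^i (n-1))/n`, which is nonzero, so `zᵢ ≠ 0`. -/
theorem zgen_ne_zero (n i : ℕ) (hn : 2 < n) (h2 : 2 ≤ i) (hi : i ≤ n) :
    MvPolynomial.coeff (Finsupp.single (⟨0, by omega⟩ : Fin n) i) (zgen n i)
      = (((n : ℚ) - 1) ^ i + (-1 : ℚ) ^ i * ((n : ℚ) - 1)) / n ∧
    (((n : ℚ) - 1) ^ i + (-1 : ℚ) ^ i * ((n : ℚ) - 1)) / n ≠ 0 ∧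
    zgen n i ≠ 0 := by
  have hn0 : (n : ℚ) ≠ 0 := by positivity
  obtain ⟨j, rfl⟩ : ∃ j, i = j + 2 := ⟨i - 2, by omega⟩
  set a : Fin n := (⟨0, by omega⟩ : Fin n) with ha
  set f : Fin n → Polynomial ℚ := fun b => if b = a then Polynomial.X else 0 with hf
  -- evaluate zgen under aeval f
  have hev : (aeval f) (zgen n (j+2))
      = ((∑ k ∈ Finset.range (j + 1),
          ((-1 : ℚ) ^ k * (n : ℚ) ^ (j + 2 - k - 1) * ((j+2).choose k : ℚ)))
        + (((j:ℚ) + 2) - 1) * (-1 : ℚ) ^ (j + 2 + 1)) • Polynomial.X ^ (j+2) := by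
    have hterm : ∀ k ∈ Finset.range (j + 1),
        (aeval f) (((-1 : ℚ) ^ k * (n : ℚ) ^ (j + 2 - k - 1) * ((j+2).choose k : ℚ)) •
          (psum (Fin n) ℚ (j + 2 - k) * psum (Fin n) ℚ 1 ^ k))
        = ((-1 : ℚ) ^ k * (n : ℚ) ^ (j + 2 - k - 1) * ((j+2).choose k : ℚ)) •
            Polynomial.X ^ (j + 2) := by
      intro k hk
      rw [Finset.mem_range] at hk
      rw [map_smul, map_mul, map_pow, aux_psum n (j+2-k) a (by omega),
        aux_psum n 1 a one_ne_zero, ← pow_mul, ← pow_add,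
        show (j + 2 - k) + 1 * k = j + 2 by omega]
    rw [zgen, show j + 2 - 1 = j + 1 from rfl, map_add, map_sum,
      Finset.sum_congr rfl hterm, map_smul, map_pow,
      aux_psum n 1 a one_ne_zero, ← pow_mul, one_mul,
      ← Finset.sum_smul, ← add_smul]
    norm_num
  have hcoeff : MvPolynomial.coeff (Finsupp.single a (j+2)) (zgen n (j+2))
      = (((n : ℚ) - 1) ^ (j+2) + (-1 : ℚ) ^ (j+2) * ((n : ℚ) - 1)) / n := by
    rw [← aux_coeff n a (j+2) (zgen n (j+2)), ← hf, hev, Polynomial.coeff_smul,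
      Polynomial.coeff_X_pow, if_pos rfl, smul_eq_mul, mul_one]
    exact aux_sum n j hn0
  have hnum : (((n : ℚ) - 1) ^ (j+2) + (-1 : ℚ) ^ (j+2) * ((n : ℚ) - 1)) ≠ 0 := by
    have h1 : (2:ℚ) ≤ (n : ℚ) - 1 := by
      have : (3:ℚ) ≤ (n:ℚ) := by exact_mod_cast hn
      linarith
    have h2' : ((n:ℚ)-1)^2 ≤ ((n:ℚ)-1)^(j+2) :=
      pow_le_pow_right₀ (by linarith) (by omega)
    rcases Nat.even_or_odd (j+2) with he | ho
    · rw [he.neg_one_pow]; nlinarith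
    · rw [ho.neg_one_pow]; nlinarith
  have hdiv : (((n : ℚ) - 1) ^ (j+2) + (-1 : ℚ) ^ (j+2) * ((n : ℚ) - 1)) / n ≠ 0 :=
    div_ne_zero hnum hn0
  refine ⟨hcoeff, hdiv, fun h0 => hdiv ?_⟩
  rw [← hcoeff, h0, MvPolynomial.coeff_zero]
end

section
/- The kernel of the derivation D_+ = Σ_{k=1}^n x_k² ∂_k restricted to the algebra of symmetric polynomials Λ_n over ℚ consists only of the constants. -/
open MvPolynomial Finset

/-- `D₊ = Σ xₖ² ∂ₖ`. -/
noncomputable def Dplus (n : ℕ) (p : MvPolynomial (Fin n) ℚ) : MvPolynomial (Fin n) ℚ :=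
  ∑ k : Fin n, X k ^ 2 * pderiv k p

/-- The weight `W s = (total degree) + s 0`. -/
private def Wt {n : ℕ} [NeZero n] (s : Fin n →₀ ℕ) : ℕ :=
  s.sum (fun _ m => m) + s 0

private lemma Wt_add {n : ℕ} [NeZero n] (s t : Fin n →₀ ℕ) :
    Wt (s + t) = Wt s + Wt t := by
  unfold Wt
  rw [Finsupp.sum_add_index' (fun _ => rfl) (fun _ _ _ => rfl), Finsupp.add_apply]
  ring

private lemma Wt_single {n : ℕ} [NeZero n] (k : Fin n) :
    Wt (Finsupp.single k 1) = 1 + Finsupp.single k (1:ℕ) 0 := by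
  unfold Wt
  rw [Finsupp.sum_single_index rfl]

private lemma Xsq_pderiv_monomial {n : ℕ} (k : Fin n) (s : Fin n →₀ ℕ) (a : ℚ) :
    X k ^ 2 * pderiv k (monomial s a) = monomial (s + Finsupp.single k 1) (a * s k) := by
  rw [pderiv_monomial]
  rcases Nat.eq_zero_or_pos (s k) with h | h
  · simp [h]
  · have hs : Finsupp.single k 2 + (s - Finsupp.single k 1) = s + Finsupp.single k 1 := by
      ext i
      rcases eq_or_ne i k with rfl | hik
      · simp [Finsupp.single_apply]
        omega
      · simp [Finsupp.single_apply, hik.symm, Ne.symm hik]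
    rw [X_pow_eq_monomial, monomial_mul, hs, one_mul]

private lemma coeff_Xsq_pderiv {n : ℕ} (k : Fin n) (μ : Fin n →₀ ℕ)
    (p : MvPolynomial (Fin n) ℚ) :
    coeff μ (X k ^ 2 * pderiv k p) =
      ∑ s ∈ p.support, if s + Finsupp.single k 1 = μ then coeff s p * s k else 0 := by
  conv_lhs => rw [p.as_sum]
  rw [map_sum (pderiv k), Finset.mul_sum, coeff_sum]
  refine Finset.sum_congr rfl fun s _ => ?_
  rw [Xsq_pderiv_monomial, coeff_monomial]

/-- The kernel of `D₊` on symmetric polynomials consists only of constants. -/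
theorem Dplus_ker_symmetric (n : ℕ) (p : MvPolynomial (Fin n) ℚ)
    (hsym : p.IsSymmetric) (hker : Dplus n p = 0) :
    ∃ c : ℚ, p = C c := by
  by_cases hconst : ∀ β ∈ p.support, β = 0
  · refine ⟨coeff 0 p, ?_⟩
    ext m
    rw [coeff_C]
    split
    · next h => rw [← h]
    · next h =>
      by_contra hm
      exact h ((hconst m (by simpa [mem_support_iff] using hm)).symm)
  · push_neg at hconst
    obtain ⟨β, hβs, hβ⟩ := hconst
    obtain ⟨j, hj'⟩ := Finsupp.ne_iff.mp hβ
    have hj : β j ≠ 0 := by simpa using hj'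
    haveI : NeZero n := ⟨fun h => (h ▸ j).elim0⟩
    -- pick a weight-maximal element of the support
    obtain ⟨α, hαs, hαmax⟩ := Finset.exists_max_image p.support Wt ⟨β, hβs⟩
    -- α 0 ≥ 1
    have hα0 : 1 ≤ α 0 := by
      by_contra h0
      have hα0' : α 0 = 0 := by omega
      -- α ≠ 0 : some coordinate is positive
      have hαne : α ≠ 0 := by
        intro h
        have h1 : 1 ≤ Wt β := by
          have hb : β j ≤ β.sum (fun _ m => m) :=
            Finset.single_le_sum (f := fun i => β i) (fun _ _ => Nat.zero_le _)
              (Finsupp.mem_support_iff.mpr hj)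
          unfold Wt; omega
        have h2 : Wt β ≤ Wt α := hαmax β hβs
        have h0 : Wt (0 : Fin n →₀ ℕ) = 0 := by simp [Wt]
        rw [h, h0] at h2
        omega
      obtain ⟨i, hi'⟩ := Finsupp.ne_iff.mp hαne
      have hi : α i ≠ 0 := by simpa using hi'
      have hine : i ≠ 0 := fun h => hi (h ▸ hα0')
      -- swap 0 and i
      set σ := Equiv.swap (0 : Fin n) i with hσ
      have hco : coeff (Finsupp.mapDomain σ α) p = coeff α p := by
        conv_lhs => rw [← hsym σ]
        exact coeff_rename_mapDomain σ σ.injective p α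
      have hmem : Finsupp.mapDomain σ α ∈ p.support := by
        rw [mem_support_iff, hco]
        exact mem_support_iff.mp hαs
      have hle := hαmax _ hmem
      have hsum : (Finsupp.mapDomain σ α).sum (fun _ m => m) = α.sum (fun _ m => m) :=
        Finsupp.sum_mapDomain_index (fun _ => rfl) (fun _ _ _ => rfl)
      have happ : (Finsupp.mapDomain (σ : Fin n → Fin n) α) 0 = α i := by
        rw [Finsupp.mapDomain_equiv_apply]
        simp [hσ, Equiv.swap_apply_left]
      rw [Wt, Wt, hsum, happ, hα0'] at hle
      omega
    -- main computation: coefficient of Dplus n p at α + e₀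
    have hkey : coeff (α + Finsupp.single 0 1) (Dplus n p) = coeff α p * α 0 := by
      unfold Dplus
      rw [coeff_sum]
      have hmain : ∀ k : Fin n,
          coeff (α + Finsupp.single 0 1) (X k ^ 2 * pderiv k p) =
            if k = 0 then coeff α p * α 0 else 0 := by
        intro k
        rw [coeff_Xsq_pderiv]
        rcases eq_or_ne k 0 with rfl | hk
        · simp only [if_pos rfl]
          rw [Finset.sum_eq_single α]
          · simp
          · intro s hs hsne
            rw [if_neg]
            intro h
            exact hsne (by simpa using add_right_cancel h)
          · intro h; exact absurd hαs h
        · rw [if_neg hk]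
          refine Finset.sum_eq_zero fun s hs => ?_
          rw [if_neg]
          intro h
          have hW := congrArg Wt h
          have e1 : Wt (Finsupp.single k (1:ℕ)) = 1 := by
            simp [Wt_single, Finsupp.single_apply, hk]
          have e2 : Wt (Finsupp.single (0 : Fin n) (1:ℕ)) = 2 := by
            simp [Wt_single, Finsupp.single_apply]
          rw [Wt_add, Wt_add, e1, e2] at hW
          have : Wt s = Wt α + 1 := by omega
          have := hαmax s hs
          omega
      rw [Finset.sum_congr rfl fun k _ => hmain k]
      simp
    rw [hker] at hkey
    simp only [coeff_zero] at hkey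
    have : coeff α p ≠ 0 := mem_support_iff.mp hαs
    have : α 0 = 0 := by
      rcases mul_eq_zero.mp hkey.symm with h | h
      · exact absurd h this
      · exact_mod_cast h
    omega
end

section
/- For all integers m ≥ 1 and all x, y: Σ_{k=0}^{2m-1} (-1/2)^{k+1} C(2m+1, k) (x^{2m+1-k} + y^{2m+1-k})(x+y)^k = (m / 2^{2m}) (x+y)^{2m+1}. -/
/-!
By the binomial theorem, `∑_{k ≤ n} c^k C(n,k) (x^{n-k} + y^{n-k}) (x+y)^k` equals
`(x + c(x+y))^n + (y + c(x+y))^n`. For `c = -1/2` the two bases are `±(x-y)/2`, so for odd `n`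
the sum vanishes. Taking `n = 2m+1`, the terms `k = 2m` and `k = 2m+1` together contribute
`(2m / 2^{2m}) (x+y)^{2m+1}`, and multiplying the rest of the sum by `-1/2` gives the identity.
-/

open Finset

theorem sum_range_smul_choose_mul_add_pow {A : Type*} [CommRing A] [Algebra ℚ A]
    (n : ℕ) (c : ℚ) (x y : A) :
    ∑ k ∈ range (n + 1), ((c ^ k * (n.choose k : ℚ)) • ((x ^ (n - k) + y ^ (n - k)) * (x + y) ^ k))
      = (c • (x + y) + x) ^ n + (c • (x + y) + y) ^ n := by
  rw [add_pow, add_pow, ← sum_add_distrib]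
  refine sum_congr rfl fun k _ => ?_
  simp only [Algebra.smul_def, mul_pow, map_mul, map_pow, map_natCast]
  ring

theorem sum_range_smul_choose_mul_add_pow_eq_zero {A : Type*} [CommRing A] [Algebra ℚ A]
    {n : ℕ} (hn : Odd n) (x y : A) :
    ∑ k ∈ range (n + 1),
      (((-1 / 2 : ℚ) ^ k * (n.choose k : ℚ)) • ((x ^ (n - k) + y ^ (n - k)) * (x + y) ^ k)) = 0 := by
  have hx : (-1 / 2 : ℚ) • (x + y) + x = (1 / 2 : ℚ) • (x - y) := by module
  have hy : (-1 / 2 : ℚ) • (x + y) + y = -((1 / 2 : ℚ) • (x - y)) := by module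
  rw [sum_range_smul_choose_mul_add_pow, hx, hy, hn.neg_pow, add_neg_cancel]

theorem girard_waring_odd_general {A : Type*} [CommRing A] [Algebra ℚ A]
    (m : ℕ) (x y : A) :
    ∑ k ∈ Finset.range (2 * m),
      (((-1 / 2 : ℚ) ^ (k + 1) * ((2 * m + 1).choose k : ℚ)) •
        ((x ^ (2 * m + 1 - k) + y ^ (2 * m + 1 - k)) * (x + y) ^ k))
    = ((m : ℚ) / 2 ^ (2 * m)) • (x + y) ^ (2 * m + 1) := by
  set f : ℕ → A := fun k => ((-1 / 2 : ℚ) ^ k * ((2 * m + 1).choose k : ℚ)) •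
    ((x ^ (2 * m + 1 - k) + y ^ (2 * m + 1 - k)) * (x + y) ^ k) with hf
  have htop : f (2 * m) + f (2 * m + 1) = ((2 * m : ℚ) / 2 ^ (2 * m)) • (x + y) ^ (2 * m + 1) := by
    have hpow : (-1 / 2 : ℚ) ^ (2 * m) = 1 / 2 ^ (2 * m) := by
      rw [neg_div, (even_two_mul m).neg_pow, div_pow, one_pow]
    simp only [hf, Nat.choose_succ_self_right, Nat.choose_self, Nat.add_sub_cancel_left,
      Nat.sub_self, pow_zero, pow_succ, hpow]
    rw [one_mul, one_mul, ← pow_succ', ← pow_succ, add_mul, one_mul]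
    module
  have hsum : ∑ k ∈ range (2 * m + 2), f k = 0 :=
    sum_range_smul_choose_mul_add_pow_eq_zero (odd_two_mul_add_one m) x y
  rw [sum_range_succ, sum_range_succ, add_assoc, htop] at hsum
  calc _ = (-1 / 2 : ℚ) • ∑ k ∈ range (2 * m), f k := by
        simp only [hf, smul_sum, smul_smul, pow_succ', mul_assoc]
    _ = (-1 / 2 : ℚ) • -(((2 * m : ℚ) / 2 ^ (2 * m)) • (x + y) ^ (2 * m + 1)) := by
        rw [eq_neg_of_add_eq_zero_left hsum]
    _ = ((m : ℚ) / 2 ^ (2 * m)) • (x + y) ^ (2 * m + 1) := by module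

/-- The first Girard–Waring type identity. -/
theorem girard_waring_odd {A : Type*} [CommRing A] [Algebra ℚ A]
    (m : ℕ) (hm : 1 ≤ m) (x y : A) :
    ∑ k ∈ Finset.range (2 * m),
      (((-1 / 2 : ℚ) ^ (k + 1) * ((2 * m + 1).choose k : ℚ)) •
        ((x ^ (2 * m + 1 - k) + y ^ (2 * m + 1 - k)) * (x + y) ^ k))
    = ((m : ℚ) / 2 ^ (2 * m)) • (x + y) ^ (2 * m + 1) :=
  girard_waring_odd_general m x y
end

section
/- For all integers m ≥ 1 and all x, y: Σ_{k=0}^{2m-2} (-1)^k 2^{2m-k-1} C(2m, k) (x^{2m-k} + y^{2m-k})(x+y)^k = (2m-1)(x+y)^{2m} + (x-y)^{2m}. -/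
open Finset

/-- The second Girard–Waring type identity. -/
theorem girard_waring_even {A : Type*} [CommRing A] [Algebra ℚ A]
    (m : ℕ) (hm : 1 ≤ m) (x y : A) :
    ∑ k ∈ Finset.range (2 * m - 1),
      (((-1 : ℚ) ^ k * 2 ^ (2 * m - k - 1) * ((2 * m).choose k : ℚ)) •
        ((x ^ (2 * m - k) + y ^ (2 * m - k)) * (x + y) ^ k))
    = ((2 * (m : ℚ) - 1)) • (x + y) ^ (2 * m) + (x - y) ^ (2 * m) := by
  set n := 2 * m with hn
  have hn2 : 2 ≤ n := by omega
  have hne : Even n := ⟨m, by omega⟩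
  obtain ⟨j, hj⟩ : ∃ j, n = j + 1 := ⟨n - 1, by omega⟩
  set φ := algebraMap ℚ A with hφ
  have h2 : (2 : A) * φ 2⁻¹ = 1 := by
    rw [show (2 : A) = φ 2 from (map_ofNat φ 2).symm, ← map_mul]; norm_num
  set f : ℕ → A := fun k =>
    φ (2 ^ (n - 1) * (-(2⁻¹)) ^ k * ((n.choose k : ℚ))) *
      ((x ^ (n - k) + y ^ (n - k)) * (x + y) ^ k) with hf
  have step1 : ∀ k ∈ Finset.range (n - 1),
      (((-1 : ℚ) ^ k * 2 ^ (n - k - 1) * ((n.choose k : ℚ))) •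
        ((x ^ (n - k) + y ^ (n - k)) * (x + y) ^ k)) = f k := by
    intro k hk
    rw [Finset.mem_range] at hk
    rw [Algebra.smul_def, hf]
    congr 2
    have hsplit : (2 : ℚ) ^ (n - 1) = 2 ^ (n - k - 1) * 2 ^ k := by
      rw [← pow_add]; congr 1; omega
    have h2k : (2 : ℚ) ^ k * 2⁻¹ ^ k = 1 := by rw [← mul_pow]; norm_num
    rw [neg_pow (2⁻¹ : ℚ) k, hsplit]
    linear_combination (-((-1 : ℚ) ^ k * 2 ^ (n - k - 1) * (n.choose k : ℚ))) * h2k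
  rw [Finset.sum_congr rfl step1]
  -- compute the full sum over range (n+1)
  have hz : ∀ k, f k = φ (2 ^ (n - 1)) *
      ((-(φ 2⁻¹ * (x + y))) ^ k * x ^ (n - k) * (n.choose k : A) +
        (-(φ 2⁻¹ * (x + y))) ^ k * y ^ (n - k) * (n.choose k : A)) := by
    intro k
    simp only [hf, map_mul, map_pow, map_neg, map_natCast]
    rw [neg_pow (φ (2⁻¹ : ℚ)) k, neg_pow (φ (2⁻¹ : ℚ) * (x + y)) k, mul_pow]
    ring
  have full : ∑ k ∈ Finset.range (n + 1), f k = (x - y) ^ n := by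
    rw [Finset.sum_congr rfl (fun k _ => hz k), ← Finset.mul_sum,
      Finset.sum_add_distrib, ← add_pow, ← add_pow]
    have hzx : -(φ 2⁻¹ * (x + y)) + x = φ 2⁻¹ * (x - y) := by
      linear_combination (-x) * h2
    have hzy : -(φ 2⁻¹ * (x + y)) + y = -(φ 2⁻¹ * (x - y)) := by
      linear_combination (-y) * h2
    rw [hzx, hzy, hne.neg_pow, mul_pow]
    have hcoef : φ (2 ^ (n - 1)) * 2 * φ 2⁻¹ ^ n = 1 := by
      rw [← map_pow, show (2 : A) = φ 2 from (map_ofNat φ 2).symm,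
        ← map_mul, ← map_mul]
      have key : (2 : ℚ) ^ (n - 1) * 2 * 2⁻¹ ^ n = 1 := by
        have h2j : (2 : ℚ) ^ j * 2⁻¹ ^ j = 1 := by rw [← mul_pow]; norm_num
        rw [hj, Nat.add_sub_cancel, pow_succ]
        linear_combination (2 : ℚ) * 2⁻¹ * h2j
      rw [key, map_one]
    linear_combination ((x - y) ^ n) * hcoef
  have hsplit : ∑ k ∈ Finset.range (n + 1), f k =
      ∑ k ∈ Finset.range (n - 1), f k + f (n - 1) + f n := by
    rw [show n + 1 = (n - 1) + 1 + 1 by omega, Finset.sum_range_succ,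
      Finset.sum_range_succ, show n - 1 + 1 = n by omega]
  have hfn1 : f (n - 1) = -((n : A) * (x + y) ^ n) := by
    simp only [hf]
    have hodd : Odd (n - 1) := by
      rcases hne with ⟨t, ht⟩; exact ⟨t - 1, by omega⟩
    have hch : (n.choose (n - 1) : ℚ) = (n : ℚ) := by
      rw [show n - 1 = n - 1 from rfl, Nat.choose_symm (by omega : 1 ≤ n),
        Nat.choose_one_right]
    have hpow : (2 : ℚ) ^ (n - 1) * (-(2⁻¹)) ^ (n - 1) = -1 := by
      rw [hodd.neg_pow, mul_neg, ← mul_pow]; norm_num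
    rw [hch, hpow, show n - (n - 1) = 1 by omega]
    simp only [pow_one, map_mul, map_neg, map_one, map_natCast]
    rw [show (x + y) * (x + y) ^ (n - 1) = (x + y) ^ n by
      rw [← pow_succ']; congr 1; omega]
    ring
  have hfn : f n = (x + y) ^ n := by
    simp only [hf]
    rw [Nat.choose_self, Nat.sub_self]
    have hpow : (2 : ℚ) ^ (n - 1) * (-(2⁻¹)) ^ n = 2⁻¹ := by
      rw [hne.neg_pow, hj, Nat.add_sub_cancel, pow_succ, ← mul_assoc, ← mul_pow]
      norm_num
    rw [hpow]
    simp only [pow_zero, Nat.cast_one, mul_one]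
    linear_combination ((x + y) ^ n) * h2
  have hfinal : ∑ k ∈ Finset.range (n - 1), f k = (x - y) ^ n - f (n - 1) - f n := by
    rw [← full, hsplit]; ring
  rw [hfinal, hfn1, hfn, Algebra.smul_def, map_sub, map_mul, map_one,
    map_ofNat, map_natCast, hn]
  push_cast
  ring
end

section
/- The operator D_+ = Σ_{k=1}^n x_k² ∂_k applied to the Vandermonde determinant a_δ = Π_{i<j}(x_i - x_j) gives D_+(a_δ) = (n-1)(x_1 + x_2 + ... + x_n)·a_δ. -/
/-!
`D₊` is a derivation with `D₊ xᵢ = xᵢ²`, so `D₊ (xᵢ - xⱼ) = (xᵢ + xⱼ)(xᵢ - xⱼ)` and, by the Leibniz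
rule, `D₊ a_δ = (Σ_{i<j} (xᵢ + xⱼ)) a_δ`. Each `xₖ` occurs in exactly `n - 1` of the pairs `i < j`.
-/

open MvPolynomial Finset

/-- The Vandermonde determinant `a_δ = Π_{i<j} (xᵢ - xⱼ)`. -/
noncomputable def vandermondePoly (n : ℕ) : MvPolynomial (Fin n) ℚ :=
  ∏ p ∈ Finset.univ.filter (fun p : Fin n × Fin n => p.1 < p.2), (X p.1 - X p.2)

theorem Derivation.map_prod_of_map_eq_mul {R A ι : Type*} [CommSemiring R] [CommRing A]
    [Algebra R A] (D : Derivation R A A) (s : Finset ι) {f g : ι → A}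
    (h : ∀ i ∈ s, D (f i) = g i * f i) :
    D (∏ i ∈ s, f i) = (∑ i ∈ s, g i) * ∏ i ∈ s, f i := by
  classical
  induction s using Finset.induction_on with
  | empty => simp
  | insert a s ha ih =>
    rw [prod_insert ha, sum_insert ha, Derivation.leibniz, smul_eq_mul, smul_eq_mul,
      ih fun i hi => h i (mem_insert_of_mem hi), h a (mem_insert_self a s)]
    ring

theorem sum_filter_lt_add_eq_smul_sum {ι R M : Type*} [Fintype ι] [LinearOrder ι] [Ring R]
    [AddCommGroup M] [Module R M] (a : ι → M) :
    ∑ p ∈ univ.filter (fun p : ι × ι => p.1 < p.2), (a p.1 + a p.2) =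
      ((Fintype.card ι : R) - 1) • ∑ i, a i := by
  have swap : ∑ p ∈ univ.filter (fun p : ι × ι => p.1 < p.2), a p.2 =
      ∑ p ∈ univ.filter (fun p : ι × ι => p.2 < p.1), a p.1 :=
    sum_equiv (Equiv.prodComm ι ι) (by simp) (by simp)
  have row_sum (i : ι) :
      ∑ j ∈ univ.filter (fun j => i ≠ j), a i = ((Fintype.card ι : R) - 1) • a i := by
    rw [sum_const, filter_ne, card_erase_of_mem (mem_univ i), card_univ,
      ← Nat.cast_smul_eq_nsmul R, Nat.cast_pred (Fintype.card_pos_iff.2 ⟨i⟩)]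
  calc ∑ p ∈ univ.filter (fun p : ι × ι => p.1 < p.2), (a p.1 + a p.2)
      = ∑ p ∈ univ.filter (fun p : ι × ι => p.1 ≠ p.2), a p.1 := by
        rw [sum_add_distrib, swap, ← sum_union (disjoint_filter.2 fun p _ h => h.asymm)]
        congr 1; ext p; simp [lt_or_lt_iff_ne]
    _ = ((Fintype.card ι : R) - 1) • ∑ i, a i := by
        rw [smul_sum, sum_filter, Fintype.sum_prod_type]
        exact sum_congr rfl fun i _ => by rw [← row_sum, sum_filter]

namespace MvPolynomial

variable {σ R : Type*} [Fintype σ] [CommRing R]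

noncomputable def dplusDerivation : Derivation R (MvPolynomial σ R) (MvPolynomial σ R) :=
  ∑ k, (X k ^ 2 : MvPolynomial σ R) • pderiv k

theorem dplusDerivation_apply (p : MvPolynomial σ R) :
    dplusDerivation p = ∑ k, X k ^ 2 * pderiv k p := by
  rw [dplusDerivation, ← Derivation.coeFnAddMonoidHom_apply, map_sum, Finset.sum_apply]
  rfl

theorem dplusDerivation_X (i : σ) : dplusDerivation (X i : MvPolynomial σ R) = X i ^ 2 := by
  classical
  simp [dplusDerivation_apply, pderiv_X, Pi.single_apply]

theorem dplusDerivation_X_sub_X (i j : σ) :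
    dplusDerivation (X i - X j : MvPolynomial σ R) = (X i + X j) * (X i - X j) := by
  rw [map_sub, dplusDerivation_X, dplusDerivation_X]
  ring

end MvPolynomial

/-- `D₊(a_δ) = (n-1)(x₁+⋯+xₙ)·a_δ`. -/
theorem Dplus_vandermonde (n : ℕ) :
    Dplus n (vandermondePoly n) =
      ((n : ℚ) - 1) • ((∑ k : Fin n, X k) * vandermondePoly n) := by
  rw [Dplus, ← dplusDerivation_apply, vandermondePoly,
    Derivation.map_prod_of_map_eq_mul _ _ fun p _ => dplusDerivation_X_sub_X p.1 p.2,
    sum_filter_lt_add_eq_smul_sum (R := ℚ), Fintype.card_fin, smul_mul_assoc]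
end

section
/- For the elementary symmetric polynomials e_i in n variables, D_+(e_i) = e_1·e_i - (i+1)·e_{i+1} for 1 ≤ i < n, and D_+(e_n) = e_1·e_n, where D_+ = Σ_{k=1}^n x_k² ∂_k. -/
open MvPolynomial Finset

lemma pderiv_prod_X {n : ℕ} (k : Fin n) (S : Finset (Fin n)) :
    pderiv k (∏ j ∈ S, (X j : MvPolynomial (Fin n) ℚ)) =
      if k ∈ S then ∏ j ∈ S.erase k, (X j : MvPolynomial (Fin n) ℚ) else 0 := by
  induction S using Finset.induction with
  | empty => simp
  | @insert a s h ih =>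
    rw [Finset.prod_insert h, pderiv_mul, ih]
    by_cases hk : k = a
    · subst hk
      simp [h, Finset.erase_insert h]
    · rw [pderiv_X_of_ne (fun hh => hk hh.symm)]
      by_cases hks : k ∈ s
      · rw [if_pos hks, if_pos (Finset.mem_insert_of_mem hks),
          Finset.erase_insert_of_ne (fun hh => hk hh.symm),
          Finset.prod_insert (fun hh => h (Finset.mem_of_mem_erase hh))]
        ring
      · rw [if_neg hks, if_neg (by simp [hk, hks])]
        ring

lemma key (n i : ℕ) (_hin : i ≤ n) :
    Dplus n (esymm (Fin n) ℚ i) =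
      esymm (Fin n) ℚ 1 * esymm (Fin n) ℚ i
        - ((i + 1 : ℕ) : ℚ) • esymm (Fin n) ℚ (i + 1) := by
  rw [eq_sub_iff_add_eq]
  have hD : Dplus n (esymm (Fin n) ℚ i) =
      ∑ k : Fin n, ∑ S ∈ (powersetCard i (univ : Finset (Fin n))).filter (fun S => k ∈ S),
        X k * ∏ j ∈ S, (X j : MvPolynomial (Fin n) ℚ) := by
    unfold Dplus
    refine Finset.sum_congr rfl fun k _ => ?_
    rw [esymm, map_sum, Finset.mul_sum, Finset.sum_filter]
    refine Finset.sum_congr rfl fun S _ => ?_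
    rw [pderiv_prod_X]
    by_cases hkS : k ∈ S
    · rw [if_pos hkS, if_pos hkS, ← Finset.mul_prod_erase S _ hkS]
      ring
    · simp [hkS]
  have hB : (((i + 1 : ℕ) : ℚ) • esymm (Fin n) ℚ (i + 1) : MvPolynomial (Fin n) ℚ) =
      ∑ k : Fin n, ∑ S ∈ (powersetCard i (univ : Finset (Fin n))).filter (fun S => k ∉ S),
        X k * ∏ j ∈ S, (X j : MvPolynomial (Fin n) ℚ) := by
    have : ∑ k : Fin n, ∑ S ∈ (powersetCard i (univ : Finset (Fin n))).filter (fun S => k ∉ S),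
        X k * ∏ j ∈ S, (X j : MvPolynomial (Fin n) ℚ) =
        ∑ T ∈ powersetCard (i+1) (univ : Finset (Fin n)), ∑ k ∈ T,
          ∏ j ∈ T, (X j : MvPolynomial (Fin n) ℚ) := by
      rw [Finset.sum_sigma', Finset.sum_sigma']
      refine Finset.sum_nbij' (fun p => ⟨insert p.1 p.2, p.1⟩) (fun p => ⟨p.2, p.1.erase p.2⟩)
        ?_ ?_ ?_ ?_ ?_
      · rintro ⟨k, S⟩ hp
        simp only [Finset.mem_sigma, Finset.mem_filter, Finset.mem_powersetCard,
          Finset.mem_univ, true_and] at hp ⊢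
        obtain ⟨⟨-, hScard⟩, hk⟩ := hp
        exact ⟨⟨Finset.subset_univ _, by rw [Finset.card_insert_of_notMem hk, hScard]⟩,
          Finset.mem_insert_self _ _⟩
      · rintro ⟨T, k⟩ hp
        simp only [Finset.mem_sigma, Finset.mem_filter, Finset.mem_powersetCard,
          Finset.mem_univ, true_and] at hp ⊢
        obtain ⟨⟨-, hTcard⟩, hk⟩ := hp
        refine ⟨⟨Finset.subset_univ _, ?_⟩, Finset.notMem_erase _ _⟩
        rw [Finset.card_erase_of_mem hk, hTcard]
        omega
      · rintro ⟨k, S⟩ hp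
        simp only [Finset.mem_sigma, Finset.mem_filter] at hp
        simp [Finset.erase_insert hp.2.2]
      · rintro ⟨T, k⟩ hp
        simp only [Finset.mem_sigma] at hp
        simp [Finset.insert_erase hp.2]
      · rintro ⟨k, S⟩ hp
        simp only [Finset.mem_sigma, Finset.mem_filter] at hp
        simp [Finset.prod_insert hp.2.2]
    rw [this]
    rw [esymm, Finset.smul_sum]
    refine Finset.sum_congr rfl fun T hT => ?_
    rw [Finset.mem_powersetCard] at hT
    rw [Finset.sum_const, hT.2]
    rw [← Nat.cast_smul_eq_nsmul ℚ]
  rw [hD, hB, ← Finset.sum_add_distrib, esymm_one, esymm, Finset.sum_mul]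
  refine Finset.sum_congr rfl fun k _ => ?_
  rw [Finset.mul_sum, ← Finset.sum_filter_add_sum_filter_not
    (powersetCard i (univ : Finset (Fin n))) (fun S => k ∈ S)]

/-- `D₊(eᵢ) = e₁·eᵢ - (i+1)·e_{i+1}` for `1 ≤ i < n`, and `D₊(eₙ) = e₁·eₙ`. -/
theorem Dplus_esymm (n : ℕ) :
    (∀ i : ℕ, 1 ≤ i → i < n →
      Dplus n (esymm (Fin n) ℚ i) =
        esymm (Fin n) ℚ 1 * esymm (Fin n) ℚ i
          - ((i + 1 : ℕ) : ℚ) • esymm (Fin n) ℚ (i + 1)) ∧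
    Dplus n (esymm (Fin n) ℚ n) = esymm (Fin n) ℚ 1 * esymm (Fin n) ℚ n := by
  constructor
  · exact fun i _ hin => key n i hin.le
  · have := key n n le_rfl
    have hz : esymm (Fin n) ℚ (n + 1) = 0 := by
      rw [esymm, Finset.powersetCard_eq_empty.mpr (by simp), Finset.sum_empty]
    rw [hz, smul_zero, sub_zero] at this
    exact this
end

section
/- For the complete homogeneous symmetric polynomials h_i in n variables, D_-(h_i) = -(n + i - 1)·h_{i-1} and D_+(h_i) = (i+1)·h_{i+1} - h_1·h_i, where D_- = -Σ_{k=1}^n ∂_k and D_+ = Σ_{k=1}^n x_k² ∂_k. -/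
/-!
Comparing coefficients of `x^d` (both equal `d k + 1` when `|d| = m`, and `0` otherwise) gives
`∂ₖ h_{m+1} = h_m + xₖ ∂ₖ h_m`. Summing over `k` and applying Euler's identity
`∑ₖ xₖ ∂ₖ h_m = m h_m` gives `D₋ h_{m+1} = -(n + m) h_m`. For `D₊`, the same relation reads
`xₖ² ∂ₖ hᵢ + xₖ hᵢ = xₖ ∂ₖ h_{i+1}`, and Euler's identity for `h_{i+1}` finishes.
-/

open MvPolynomial Finset

/-- The complete homogeneous symmetric polynomial `hᵢ` in `n` variables. -/
noncomputable def hsymm (n i : ℕ) : MvPolynomial (Fin n) ℚ :=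
  ∑ s : Sym (Fin n) i, ((s : Multiset (Fin n)).map X).prod

namespace MvPolynomial

variable {σ R : Type*} [CommSemiring R]

theorem coeff_X_mul_pderiv (k : σ) (p : MvPolynomial σ R) (d : σ →₀ ℕ) :
    coeff d (X k * pderiv k p) = d k * coeff d p := by
  classical
  induction p using induction_on' with
  | monomial e a =>
    rw [X_mul_pderiv_monomial, coeff_smul, coeff_monomial]
    split_ifs with h
    · rw [h, nsmul_eq_mul]
    · simp
  | add p q hp hq => rw [map_add, mul_add, coeff_add, hp, hq, coeff_add, mul_add]

theorem prod_map_X_eq_monomial_toFinsupp [DecidableEq σ] (s : Multiset σ) :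
    (s.map X).prod = monomial (Multiset.toFinsupp s) (1 : R) := by
  induction s using Multiset.induction with
  | empty => simp
  | cons a s ih =>
    rw [Multiset.map_cons, Multiset.prod_cons, ih, ← Multiset.singleton_add,
      Multiset.toFinsupp_add, Multiset.toFinsupp_singleton, X, monomial_mul, one_mul]

variable [Fintype σ] [DecidableEq σ]

theorem coeff_hsymm (m : ℕ) (d : σ →₀ ℕ) :
    coeff d (hsymm σ R m) = if d.degree = m then 1 else 0 := by
  simp_rw [hsymm, prod_map_X_eq_monomial_toFinsupp, coeff_sum, coeff_monomial]
  by_cases hd : d.degree = m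
  · rw [if_pos hd, Fintype.sum_eq_single ((Sym.equivNatSum σ m).symm ⟨d, hd⟩)]
    · simp
    · intro s hs
      refine if_neg fun h => hs ?_
      rw [Equiv.eq_symm_apply]
      exact Subtype.ext h
  · rw [if_neg hd]
    refine Finset.sum_eq_zero fun s _ => if_neg ?_
    rintro rfl
    exact hd ((Multiset.toFinsupp_sum_eq _).trans s.2)

theorem isHomogeneous_hsymm (m : ℕ) : (hsymm σ R m).IsHomogeneous m := by
  simp_rw [hsymm, prod_map_X_eq_monomial_toFinsupp]
  exact IsHomogeneous.sum _ _ _ fun s _ =>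
    isHomogeneous_monomial _ ((Multiset.toFinsupp_sum_eq _).trans s.2)

theorem pderiv_hsymm_succ (k : σ) (m : ℕ) :
    pderiv k (hsymm σ R (m + 1)) = hsymm σ R m + X k * pderiv k (hsymm σ R m) := by
  ext d
  rw [coeff_pderiv, coeff_add, coeff_X_mul_pderiv, coeff_hsymm, coeff_hsymm, map_add,
    Finsupp.degree_single]
  simp only [Nat.add_right_cancel_iff]
  split_ifs <;> simp [add_comm]

theorem sum_pderiv_hsymm_succ (m : ℕ) :
    ∑ k, pderiv k (hsymm σ R (m + 1)) = (Fintype.card σ + m) • hsymm σ R m := by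
  rw [sum_congr rfl fun k _ => pderiv_hsymm_succ k m, sum_add_distrib,
    (isHomogeneous_hsymm m).sum_X_mul_pderiv, sum_const, card_univ, add_smul]

theorem sum_X_sq_mul_pderiv_hsymm_add_hsymm_one_mul (m : ℕ) :
    ∑ k, X k ^ 2 * pderiv k (hsymm σ R m) + hsymm σ R 1 * hsymm σ R m =
      (m + 1) • hsymm σ R (m + 1) := by
  calc ∑ k, X k ^ 2 * pderiv k (hsymm σ R m) + hsymm σ R 1 * hsymm σ R m
      = ∑ k, X k * pderiv k (hsymm σ R (m + 1)) := by
        rw [hsymm_one, sum_mul, ← sum_add_distrib]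
        refine sum_congr rfl fun k _ => ?_
        rw [pderiv_hsymm_succ]
        ring
    _ = (m + 1) • hsymm σ R (m + 1) := (isHomogeneous_hsymm (m + 1)).sum_X_mul_pderiv

end MvPolynomial

theorem hsymm_eq_mvPolynomial_hsymm (n : ℕ) : hsymm n = MvPolynomial.hsymm (Fin n) ℚ := rfl

theorem D_hsymm_general (n i : ℕ) (h1 : 1 ≤ i) :
    Dminus n (hsymm n i) = -(((n + i - 1 : ℕ) : ℚ) • hsymm n (i - 1)) ∧
    Dplus n (hsymm n i) =
      ((i + 1 : ℕ) : ℚ) • hsymm n (i + 1) - hsymm n 1 * hsymm n i := by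
  obtain ⟨m, rfl⟩ := Nat.exists_eq_add_of_le' h1
  rw [Dminus, Dplus, hsymm_eq_mvPolynomial_hsymm, Nat.cast_smul_eq_nsmul, Nat.cast_smul_eq_nsmul,
    Nat.add_succ_sub_one, Nat.add_sub_cancel, sum_pderiv_hsymm_succ, Fintype.card_fin]
  exact ⟨rfl, eq_sub_of_add_eq (sum_X_sq_mul_pderiv_hsymm_add_hsymm_one_mul _)⟩

/-- `D₋(hᵢ) = -(n+i-1)·h_{i-1}` and `D₊(hᵢ) = (i+1)·h_{i+1} - h₁·hᵢ` for `1 ≤ i ≤ n`. -/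
theorem D_hsymm (n i : ℕ) (h1 : 1 ≤ i) (hn : i ≤ n) :
    Dminus n (hsymm n i) = -(((n + i - 1 : ℕ) : ℚ) • hsymm n (i - 1)) ∧
    Dplus n (hsymm n i) =
      ((i + 1 : ℕ) : ℚ) • hsymm n (i + 1) - hsymm n 1 * hsymm n i :=
  D_hsymm_general n i h1
end
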